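/- arXiv:1206.5930 — 2 statements merged into one kernel-verified Lean document; each statement's English description precedes it below -/
import Mathlib

section
/- Every pentagonal geometry has unique neighborhoods: if two points p and q satisfy N(p) = N(q), then p = q. -/
open Finset

variable {P : Type*}

/-- Two points are collinear if they are equal or some line contains both. -/
def Collin [DecidableEq P] (L : Finset (Finset P)) (p q : P) : Prop :=
  p = q ∨ ∃ l ∈ L, p ∈ l ∧ q ∈ l

/-- The (open) neighborhood `N p` of a point `p`: the points collinear with `p`
and different from `p`. -/
def nbhd [Fintype P] [DecidableEq P] (L : Finset (Finset P)) (p : P) : Finset P :=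
  Finset.univ.filter fun q => q ≠ p ∧ ∃ l ∈ L, p ∈ l ∧ q ∈ l

/-- The closed neighborhood `CN p` of a point `p`: its neighborhood together with `p`. -/
def cnbhd [Fintype P] [DecidableEq P] (L : Finset (Finset P)) (p : P) : Finset P :=
  insert p (nbhd L p)

/-- A combinatorial `(v,b,r,k)`-configuration: `v` points, `b` lines, every line
has exactly `k ≥ 2` points, every point is on exactly `r ≥ 1` lines, and any two
distinct points are on at most one common line. -/
def IsConfiguration [Fintype P] [DecidableEq P] (L : Finset (Finset P))
    (v b r k : ℕ) : Prop :=
  Fintype.card P = v ∧ L.card = b ∧ 2 ≤ k ∧ 1 ≤ r ∧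
  (∀ l ∈ L, l.card = k) ∧
  (∀ p : P, (L.filter fun l => p ∈ l).card = r) ∧
  (∀ p q : P, p ≠ q → (L.filter fun l => p ∈ l ∧ q ∈ l).card ≤ 1)

/-- A pentagonal geometry: a combinatorial configuration in which, for every
point `p`, there is a line (the opposite line of `p`) whose point set is the
complement of the closed neighborhood of `p`. -/
def IsPentagonalGeometry [Fintype P] [DecidableEq P] (L : Finset (Finset P))
    (v b r k : ℕ) : Prop :=
  IsConfiguration L v b r k ∧ ∀ p : P, ∃ l ∈ L, l = Finset.univ \ cnbhd L p

section Neighborhoods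

variable [Fintype P] [DecidableEq P] {L : Finset (Finset P)} {l : Finset P} {p q x : P}

@[simp]
theorem mem_nbhd : q ∈ nbhd L p ↔ q ≠ p ∧ ∃ l ∈ L, p ∈ l ∧ q ∈ l := by
  simp [nbhd]

theorem mem_nbhd_comm : q ∈ nbhd L p ↔ p ∈ nbhd L q := by
  simp only [mem_nbhd]
  exact and_congr ne_comm (exists_congr fun _ => and_congr_right' and_comm)

theorem mem_nbhd_of_mem_line (hl : l ∈ L) (hp : p ∈ l) (hq : q ∈ l) (hqp : q ≠ p) :
    q ∈ nbhd L p :=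
  mem_nbhd.2 ⟨hqp, l, hl, hp, hq⟩

theorem mem_compl_cnbhd : x ∈ univ \ cnbhd L p ↔ x ≠ p ∧ x ∉ nbhd L p := by
  simp only [cnbhd, mem_sdiff, mem_univ, mem_insert, true_and, not_or]

theorem IsConfiguration.one_lt_card {v b r k : ℕ} (hL : IsConfiguration L v b r k)
    (hl : l ∈ L) : 1 < l.card := by
  obtain ⟨-, -, hk, -, hcard, -⟩ := hL
  rw [hcard l hl]
  omega

/-- If `q ≠ p` had the neighborhood of `p`, it would lie on the opposite line `l` of `p`;
any other point of `l` is then a neighbor of `q` but not of `p`. -/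
theorem eq_of_nbhd_eq_of_opposite_line (hl : l ∈ L) (hopp : l = univ \ cnbhd L p)
    (hcard : 1 < l.card) (h : nbhd L p = nbhd L q) : p = q := by
  by_contra hpq
  have hq_not_nbhd : q ∉ nbhd L p := fun hq => by
    have hp : p ∈ nbhd L p := h ▸ mem_nbhd_comm.1 hq
    exact (mem_nbhd.1 hp).1 rfl
  have hql : q ∈ l := hopp ▸ mem_compl_cnbhd.2 ⟨Ne.symm hpq, hq_not_nbhd⟩
  obtain ⟨x, hxl, hxq⟩ := exists_mem_ne hcard q
  have hx_not_nbhd : x ∉ nbhd L p := (mem_compl_cnbhd.1 (hopp ▸ hxl)).2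
  exact hx_not_nbhd (h ▸ mem_nbhd_of_mem_line hl hql hxl hxq)

end Neighborhoods

/-- Every pentagonal geometry has unique neighborhoods: if `N p = N q` then
`p = q`. -/
theorem pentagonal_unique_neighborhoods {P : Type*} [Fintype P] [DecidableEq P]
    (L : Finset (Finset P)) (v b r k : ℕ)
    (hP : IsPentagonalGeometry L v b r k) (p q : P)
    (h : nbhd L p = nbhd L q) :
    p = q := by
  obtain ⟨hconf, hopp⟩ := hP
  obtain ⟨l, hl, hl_eq⟩ := hopp p
  exact eq_of_nbhd_eq_of_opposite_line hl hl_eq (hconf.one_lt_card hl) h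
end

section
/- If two distinct points p and q of a pentagonal geometry have the same opposite line l, then p and q are collinear and every point of l has as its opposite line the line spanned by p and q. -/
/-!
Points with the same opposite line have the same closed neighbourhood, so each lies in the
other's. A point `x` of the common opposite line is collinear with neither `p` nor `q`, hence
both lie on the opposite line of `x`; as two distinct points span at most one line, that line
is the one spanned by `p` and `q`.
-/

open Finset

variable {P : Type*}

theorem Collin.symm [DecidableEq P] {L : Finset (Finset P)} {p q : P} (h : Collin L p q) :
    Collin L q p := by
  rcases h with rfl | ⟨l, hl, hp, hq⟩
  · exact Or.inl rfl
  · exact Or.inr ⟨l, hl, hq, hp⟩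

section Neighbourhood

variable [Fintype P] [DecidableEq P] {L : Finset (Finset P)} {p q : P}

theorem mem_cnbhd_iff : q ∈ cnbhd L p ↔ Collin L p q := by
  unfold cnbhd nbhd Collin
  simp only [mem_insert, mem_filter, mem_univ, true_and]
  rcases eq_or_ne q p with rfl | hqp
  · simp
  · simp [hqp, hqp.symm]

theorem mem_compl_cnbhd_iff : q ∈ univ \ cnbhd L p ↔ ¬ Collin L p q := by
  rw [mem_sdiff, mem_cnbhd_iff]
  exact and_iff_right (mem_univ q)

theorem cnbhd_eq_of_compl_eq (h : univ \ cnbhd L p = univ \ cnbhd L q) :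
    cnbhd L p = cnbhd L q := by
  simpa only [← compl_eq_univ_sdiff, compl_inj_iff] using h

end Neighbourhood

theorem IsConfiguration.eq_of_mem_of_mem [Fintype P] [DecidableEq P]
    {L : Finset (Finset P)} {v b r k : ℕ} (hC : IsConfiguration L v b r k)
    {p q : P} (hpq : p ≠ q) {l m : Finset P} (hl : l ∈ L) (hm : m ∈ L)
    (hpl : p ∈ l) (hql : q ∈ l) (hpm : p ∈ m) (hqm : q ∈ m) : l = m :=
  card_le_one.mp (hC.2.2.2.2.2.2 p q hpq) l (mem_filter.mpr ⟨hl, hpl, hql⟩)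
    m (mem_filter.mpr ⟨hm, hpm, hqm⟩)

theorem pentagonal_opposite_line_pair_general {P : Type*} [Fintype P] [DecidableEq P]
    (L : Finset (Finset P)) (v b r k : ℕ)
    (hP : IsPentagonalGeometry L v b r k) (p q : P) (hpq : p ≠ q)
    (l : Finset P)
    (hlp : l = Finset.univ \ cnbhd L p) (hlq : l = Finset.univ \ cnbhd L q) :
    Collin L p q ∧
    ∀ x ∈ l, ∀ m ∈ L, p ∈ m → q ∈ m → m = Finset.univ \ cnbhd L x := by
  have hCN : cnbhd L p = cnbhd L q := cnbhd_eq_of_compl_eq (hlp ▸ hlq)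
  refine ⟨mem_cnbhd_iff.mp (hCN ▸ mem_cnbhd_iff.mpr (Or.inl rfl)), ?_⟩
  intro x hx m hm hpm hqm
  have hpx : ¬ Collin L x p := fun h => mem_compl_cnbhd_iff.mp (hlp ▸ hx) h.symm
  have hqx : ¬ Collin L x q := fun h => mem_compl_cnbhd_iff.mp (hlq ▸ hx) h.symm
  obtain ⟨l', hl', rfl⟩ := hP.2 x
  exact hP.1.eq_of_mem_of_mem hpq hm hl' hpm hqm
    (mem_compl_cnbhd_iff.mpr hpx) (mem_compl_cnbhd_iff.mpr hqx)

/-- If two distinct points `p` and `q` of a pentagonal geometry have the same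
opposite line `l`, then `p` and `q` are collinear and every point of `l` has as
its opposite line the line spanned by `p` and `q`. -/
theorem pentagonal_opposite_line_pair {P : Type*} [Fintype P] [DecidableEq P]
    (L : Finset (Finset P)) (v b r k : ℕ)
    (hP : IsPentagonalGeometry L v b r k) (p q : P) (hpq : p ≠ q)
    (l : Finset P) (hl : l ∈ L)
    (hlp : l = Finset.univ \ cnbhd L p) (hlq : l = Finset.univ \ cnbhd L q) :
    Collin L p q ∧
    ∀ x ∈ l, ∀ m ∈ L, p ∈ m → q ∈ m → m = Finset.univ \ cnbhd L x :=
  pentagonal_opposite_line_pair_general L v b r k hP p q hpq l hlp hlq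
end
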